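/- arXiv:1709.00106 — 3 statements merged into one kernel-verified Lean document; each statement's English description precedes it below -/
import Mathlib

section
/- (Proposition 4.1(ii).) Let p > 0 and let Z_1, Z_2, … be i.i.d. real random variables whose common distribution has compact support, with expectation μ. Then there exists a constant C such that for every n ≥ 1, E[√n·|Ẑ_mod^n − μ|] ≤ C; that is, E[√n·|Ẑ_mod^n − μ|] = O(1) as n → ∞. -/
open MeasureTheory ProbabilityTheory Filter

lemma integral_abs_le_sqrt_integral_sq {Ω : Type*} [MeasurableSpace Ω] (P : Measure Ω)
    [IsProbabilityMeasure P] (f : Ω → ℝ) (hf : MemLp f 2 P) :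
    ∫ ω, |f ω| ∂P ≤ Real.sqrt (∫ ω, f ω ^ 2 ∂P) := by
  have hconj : Real.HolderConjugate 2 2 := Real.HolderConjugate.two_two
  have habs : MemLp (fun ω => |f ω|) (ENNReal.ofReal 2) P := by
    have : MemLp (fun ω => ‖f ω‖) 2 P := hf.norm
    simpa [Real.norm_eq_abs, show ENNReal.ofReal 2 = 2 by norm_num] using this
  have hone : MemLp (fun _ : Ω => (1 : ℝ)) (ENNReal.ofReal 2) P := memLp_const 1
  have h := integral_mul_le_Lp_mul_Lq_of_nonneg hconj
    (Eventually.of_forall fun ω => abs_nonneg (f ω))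
    (Eventually.of_forall fun _ => zero_le_one) habs hone
  have h1 : ∫ ω, |f ω| * 1 ∂P = ∫ ω, |f ω| ∂P := by simp
  have h2 : ∫ ω, |f ω| ^ (2 : ℝ) ∂P = ∫ ω, f ω ^ 2 ∂P := by
    refine integral_congr_ae (Eventually.of_forall fun ω => ?_)
    show |f ω| ^ (2 : ℝ) = f ω ^ 2
    rw [show ((2:ℝ)) = ((2:ℕ):ℝ) by norm_num, Real.rpow_natCast, sq_abs]
  have h3 : ∫ ω, (1 : ℝ) ^ (2 : ℝ) ∂P = 1 := by simp
  rw [h1, h2, h3] at h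
  calc ∫ ω, |f ω| ∂P ≤ (∫ ω, f ω ^ 2 ∂P) ^ (1/2 : ℝ) * 1 ^ (1/2 : ℝ) := h
    _ = Real.sqrt (∫ ω, f ω ^ 2 ∂P) := by
        rw [Real.one_rpow, mul_one, Real.sqrt_eq_rpow]

/-- **Proposition 4.1(ii).** For `p > 0` and i.i.d. real random variables `Z i` with
compactly supported common law and mean `μ`, the expectations
`E[√n · |Ẑ_mod^n − μ|]`, where `Ẑ_mod^n = (∑_{i=1}^n (i/n)^p Z i) / (∑_{i=1}^n (i/n)^p)`,
are uniformly bounded in `n ≥ 1`. -/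
theorem stmt1 {Ω : Type*} [MeasurableSpace Ω] (P : Measure Ω) [IsProbabilityMeasure P]
    (p : ℝ) (hp : 0 < p)
    (Z : ℕ → Ω → ℝ) (hmeas : ∀ i, Measurable (Z i))
    (hindep : iIndepFun Z P)
    (hident : ∀ i, IdentDistrib (Z i) (Z 0) P P)
    (K : Set ℝ) (hK : IsCompact K) (hsupp : ∀ᵐ ω ∂P, Z 0 ω ∈ K)
    (μ : ℝ) (hμ : ∫ ω, Z 0 ω ∂P = μ) :
    ∃ C : ℝ, ∀ n : ℕ, 1 ≤ n →
      ∫ ω, Real.sqrt n *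
          |(∑ i ∈ Finset.Icc 1 n, ((i : ℝ) / n) ^ p * Z i ω) /
              (∑ i ∈ Finset.Icc 1 n, ((i : ℝ) / n) ^ p) - μ| ∂P ≤ C := by
  classical
  obtain ⟨M, hM⟩ : ∃ M : ℝ, ∀ x ∈ K, |x| ≤ M := by
    obtain ⟨M, hM⟩ := hK.isBounded.subset_closedBall 0
    exact ⟨M, fun x hx => by simpa [Real.dist_eq] using hM hx⟩
  have hbound : ∀ i, ∀ᵐ ω ∂P, |Z i ω| ≤ M := by
    intro i
    have h0 : ∀ᵐ ω ∂P, |Z 0 ω| ≤ M := hsupp.mono fun ω hω => hM _ hω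
    have hms : MeasurableSet {x : ℝ | |x| ≤ M} :=
      measurableSet_le (measurable_abs) measurable_const
    have h0' : ∀ᵐ x ∂(Measure.map (Z 0) P), |x| ≤ M :=
      (ae_map_iff (hmeas 0).aemeasurable hms).2 h0
    rw [← (hident i).map_eq] at h0'
    exact (ae_map_iff (hmeas i).aemeasurable hms).1 h0'
  have hmem : ∀ i, MemLp (Z i) 2 P := fun i =>
    MemLp.of_bound (hmeas i).aestronglyMeasurable M
      ((hbound i).mono fun ω h => by simpa [Real.norm_eq_abs] using h)
  set V : ℝ := variance (fun ω => Z 0 ω - μ) P with hVdef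
  have hV : 0 ≤ V := variance_nonneg _ _
  have hq : 0 < (1/2 : ℝ) ^ p := Real.rpow_pos_of_pos (by norm_num) p
  refine ⟨2 * Real.sqrt V / ((1/2 : ℝ) ^ p), fun n hn => ?_⟩
  have hn' : (0 : ℝ) < n := by exact_mod_cast Nat.pos_of_ne_zero (by omega)
  set w : ℕ → ℝ := fun i => ((i : ℝ) / n) ^ p with hwdef
  set W : ℝ := ∑ i ∈ Finset.Icc 1 n, w i with hWdef
  have hw_nonneg : ∀ i, 0 ≤ w i := fun i =>
    Real.rpow_nonneg (div_nonneg (Nat.cast_nonneg i) (Nat.cast_nonneg n)) p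
  have hw_le_one : ∀ i ∈ Finset.Icc 1 n, w i ≤ 1 := by
    intro i hi
    rw [Finset.mem_Icc] at hi
    have : (i : ℝ) / n ≤ 1 := by
      rw [div_le_one hn']; exact_mod_cast hi.2
    simpa using Real.rpow_le_one (div_nonneg (Nat.cast_nonneg i) (Nat.cast_nonneg n)) this hp.le
  -- lower bound on W
  have hW_lb : (n : ℝ)/2 * (1/2 : ℝ) ^ p ≤ W := by
    have hsub : Finset.Icc (n/2+1) n ⊆ Finset.Icc 1 n :=
      Finset.Icc_subset_Icc (by omega) le_rfl
    have h1 : ∑ i ∈ Finset.Icc (n/2+1) n, w i ≤ W :=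
      Finset.sum_le_sum_of_subset_of_nonneg hsub (fun i _ _ => hw_nonneg i)
    have h2 : ∀ i ∈ Finset.Icc (n/2+1) n, (1/2 : ℝ) ^ p ≤ w i := by
      intro i hi
      rw [Finset.mem_Icc] at hi
      refine Real.rpow_le_rpow (by norm_num) ?_ hp.le
      rw [div_le_div_iff₀ (by norm_num) hn']
      have : n ≤ 2 * i := by omega
      have : (n : ℝ) ≤ 2 * i := by exact_mod_cast this
      linarith
    have h3 : (Finset.Icc (n/2+1) n).card • ((1/2 : ℝ) ^ p) ≤
        ∑ i ∈ Finset.Icc (n/2+1) n, w i := Finset.card_nsmul_le_sum _ _ _ h2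
    have hcard : (Finset.Icc (n/2+1) n).card = n - n/2 := by
      rw [Nat.card_Icc]; omega
    have hhalf : (n : ℝ)/2 ≤ ((n - n/2 : ℕ) : ℝ) := by
      have h4 : ((n - n/2 : ℕ) : ℝ) = (n : ℝ) - ((n/2 : ℕ) : ℝ) := by
        have : n/2 ≤ n := Nat.div_le_self n 2
        exact Nat.cast_sub this
      have h5 : ((n/2 : ℕ) : ℝ) ≤ (n : ℝ)/2 := by
        have := Nat.div_mul_le_self n 2
        have : ((n/2 : ℕ) : ℝ) * 2 ≤ (n : ℝ) := by exact_mod_cast this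
        linarith
      rw [h4]; linarith
    calc (n : ℝ)/2 * (1/2 : ℝ) ^ p
        ≤ ((n - n/2 : ℕ) : ℝ) * (1/2 : ℝ) ^ p :=
          mul_le_mul_of_nonneg_right hhalf hq.le
      _ = (Finset.Icc (n/2+1) n).card • ((1/2 : ℝ) ^ p) := by
          rw [hcard, nsmul_eq_mul]
      _ ≤ ∑ i ∈ Finset.Icc (n/2+1) n, w i := h3
      _ ≤ W := h1
  have hW_pos : 0 < W := lt_of_lt_of_le (by positivity) hW_lb
  set X : ℕ → Ω → ℝ := fun i ω => w i * (Z i ω - μ) with hXdef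
  have hmemX : ∀ i, MemLp (X i) 2 P := fun i =>
    ((hmem i).sub (memLp_const μ)).const_mul (w i)
  set T : Ω → ℝ := fun ω => ∑ i ∈ Finset.Icc 1 n, X i ω with hTdef
  have hmemT : MemLp T 2 P := by
    have h := memLp_finset_sum' (Finset.Icc 1 n) (fun i (_ : i ∈ Finset.Icc 1 n) => hmemX i)
    have : (∑ i ∈ Finset.Icc 1 n, X i) = T := by
      funext ω; simp [hTdef, Finset.sum_apply]
    rwa [this] at h
  have hEZ : ∀ i, ∫ ω, Z i ω ∂P = μ := fun i => by rw [(hident i).integral_eq, hμ]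
  have hEX : ∀ i, ∫ ω, X i ω ∂P = 0 := by
    intro i
    rw [hXdef]
    simp only []
    rw [integral_const_mul, integral_sub ((hmem i).integrable one_le_two) (integrable_const μ)]
    simp [hEZ i]
  have hET : ∫ ω, T ω ∂P = 0 := by
    rw [hTdef]
    simp only []
    rw [integral_finset_sum _ (fun i _ => ((hmemX i).integrable one_le_two))]
    exact Finset.sum_eq_zero fun i _ => hEX i
  -- variance bound
  have hVarX : ∀ i, variance (X i) P = w i ^ 2 * V := by
    intro i
    have h1 : variance (X i) P = w i ^ 2 * variance (fun ω => Z i ω - μ) P :=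
      variance_const_mul (w i) (fun ω => Z i ω - μ) P
    rw [h1, ((hident i).sub_const μ).variance_eq]
  have hpair : Set.Pairwise ↑(Finset.Icc 1 n) fun i j => IndepFun (X i) (X j) P := by
    intro i _ j _ hij
    exact (hindep.indepFun hij).comp
      ((measurable_id.sub measurable_const).const_mul (w i))
      ((measurable_id.sub measurable_const).const_mul (w j))
  have hVarT : variance T P ≤ n * V := by
    have hsum := IndepFun.variance_sum (μ := P) (fun i (_ : i ∈ Finset.Icc 1 n) => hmemX i) hpair
    have hTfun : (∑ i ∈ Finset.Icc 1 n, X i) = T := by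
      funext ω; simp [hTdef, Finset.sum_apply]
    rw [hTfun] at hsum
    rw [hsum]
    calc ∑ i ∈ Finset.Icc 1 n, variance (X i) P
        = ∑ i ∈ Finset.Icc 1 n, w i ^ 2 * V := by
          exact Finset.sum_congr rfl fun i _ => hVarX i
      _ ≤ ∑ i ∈ Finset.Icc 1 n, 1 * V := by
          refine Finset.sum_le_sum fun i hi => ?_
          have h1 : w i ^ 2 ≤ 1 := by
            have := hw_le_one i hi
            nlinarith [hw_nonneg i]
          nlinarith
      _ = (Finset.Icc 1 n).card * V := by rw [Finset.sum_const, nsmul_eq_mul]; ring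
      _ = n * V := by rw [Nat.card_Icc]; norm_num
  have hT2 : ∫ ω, T ω ^ 2 ∂P = variance T P := by
    rw [variance_eq_sub hmemT, hET]
    simp [Pi.pow_apply]
  have hintT : ∫ ω, |T ω| ∂P ≤ Real.sqrt n * Real.sqrt V := by
    calc ∫ ω, |T ω| ∂P ≤ Real.sqrt (∫ ω, T ω ^ 2 ∂P) :=
          integral_abs_le_sqrt_integral_sq P T hmemT
      _ ≤ Real.sqrt ((n : ℝ) * V) := by
          rw [hT2]; exact Real.sqrt_le_sqrt hVarT
      _ = Real.sqrt n * Real.sqrt V := Real.sqrt_mul hn'.le V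
  -- pointwise rewriting
  have hpt : ∀ ω, Real.sqrt n *
      |(∑ i ∈ Finset.Icc 1 n, w i * Z i ω) / W - μ| = Real.sqrt n / W * |T ω| := by
    intro ω
    have hST : T ω = (∑ i ∈ Finset.Icc 1 n, w i * Z i ω) - μ * W := by
      have hμW : μ * W = ∑ i ∈ Finset.Icc 1 n, w i * μ := by
        rw [hWdef, Finset.mul_sum]
        exact Finset.sum_congr rfl fun i _ => by ring
      rw [hμW, ← Finset.sum_sub_distrib]
      simp only [hTdef]
      exact Finset.sum_congr rfl fun i _ => by simp only [hXdef]; ring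
    have hdiv : (∑ i ∈ Finset.Icc 1 n, w i * Z i ω) / W - μ
        = ((∑ i ∈ Finset.Icc 1 n, w i * Z i ω) - μ * W) / W := by
      field_simp
    rw [hdiv, ← hST, abs_div, abs_of_pos hW_pos]
    ring
  have hgoal : ∫ ω, Real.sqrt n *
      |(∑ i ∈ Finset.Icc 1 n, w i * Z i ω) / W - μ| ∂P
      = Real.sqrt n / W * ∫ ω, |T ω| ∂P := by
    rw [integral_congr_ae (Eventually.of_forall hpt), integral_const_mul]
  rw [hgoal]
  have hsn : 0 ≤ Real.sqrt n / W := div_nonneg (Real.sqrt_nonneg _) hW_pos.le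
  calc Real.sqrt n / W * ∫ ω, |T ω| ∂P
      ≤ Real.sqrt n / W * (Real.sqrt n * Real.sqrt V) :=
        mul_le_mul_of_nonneg_left hintT hsn
    _ = (n : ℝ) / W * Real.sqrt V := by
        rw [div_mul_eq_mul_div, div_mul_eq_mul_div]
        congr 1
        rw [← mul_assoc, Real.mul_self_sqrt hn'.le]
    _ ≤ 2 / (1/2 : ℝ) ^ p * Real.sqrt V := by
        refine mul_le_mul_of_nonneg_right ?_ (Real.sqrt_nonneg V)
        rw [div_le_div_iff₀ hW_pos hq]
        calc (n : ℝ) * (1/2 : ℝ) ^ p = 2 * ((n : ℝ)/2 * (1/2 : ℝ) ^ p) := by ring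
          _ ≤ 2 * W := by linarith
    _ = 2 * Real.sqrt V / (1/2 : ℝ) ^ p := by ring
end

section
/- (Second-moment bound for weighted averages, key step in the proof of Proposition 4.1(ii).) Let p > 0, B > 0, and let Z_1,…,Z_n be independent real random variables, each with expectation μ and satisfying |Z_i − μ| ≤ B almost surely. Then E[n·(Ẑ_mod^n − μ)²] ≤ ((p+1)²/(2p+1))·B²·((n+1)/n)^{2p+1} for every n ≥ 1. -/
open MeasureTheory ProbabilityTheory

/-- Bernoulli-type tangent-line inequality for `rpow`. -/
lemma bern_aux {a b q : ℝ} (ha : 0 < a) (hb : 0 ≤ b) (hq : 1 ≤ q) :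
    a ^ q + q * a ^ (q - 1) * (b - a) ≤ b ^ q := by
  have hs : (-1 : ℝ) ≤ b / a - 1 := by
    have : 0 ≤ b / a := div_nonneg hb ha.le
    linarith
  have h := one_add_mul_self_le_rpow_one_add hs hq
  have h1 : (1 : ℝ) + (b / a - 1) = b / a := by ring
  rw [h1, Real.div_rpow hb ha.le] at h
  have hapos : 0 < a ^ q := Real.rpow_pos_of_pos ha q
  have h2 := mul_le_mul_of_nonneg_left h hapos.le
  have h3 : a ^ q * (b ^ q / a ^ q) = b ^ q := by field_simp
  have h4 : a ^ q * (1 + q * (b / a - 1)) = a ^ q + q * a ^ (q - 1) * (b - a) := by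
    have h5 : a ^ (q - 1) = a ^ q / a := by
      rw [Real.rpow_sub ha, Real.rpow_one]
    rw [h5]
    field_simp
  rw [h3, h4] at h2
  exact h2

set_option maxHeartbeats 1000000 in
/-- **Second-moment bound for weighted averages** (key step in the proof of
Proposition 4.1(ii)). For `p > 0`, `B > 0`, and independent real random variables `Z i`
with common mean `μ` and `|Z i − μ| ≤ B` almost surely,
`E[n·(Ẑ_mod^n − μ)²] ≤ ((p+1)²/(2p+1))·B²·((n+1)/n)^(2p+1)` for every `n ≥ 1`, where
`Ẑ_mod^n = (∑_{i=1}^n (i/n)^p Z i) / (∑_{i=1}^n (i/n)^p)`. -/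
theorem stmt2 {Ω : Type*} [MeasurableSpace Ω] (P : Measure Ω) [IsProbabilityMeasure P]
    (p B μ : ℝ) (hp : 0 < p) (hB : 0 < B)
    (Z : ℕ → Ω → ℝ) (hmeas : ∀ i, Measurable (Z i))
    (hindep : iIndepFun Z P)
    (hmean : ∀ i, ∫ ω, Z i ω ∂P = μ)
    (hbdd : ∀ i, ∀ᵐ ω ∂P, |Z i ω - μ| ≤ B) :
    ∀ n : ℕ, 1 ≤ n →
      ∫ ω, (n : ℝ) *
          ((∑ i ∈ Finset.Icc 1 n, ((i : ℝ) / n) ^ p * Z i ω) /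
            (∑ i ∈ Finset.Icc 1 n, ((i : ℝ) / n) ^ p) - μ) ^ 2 ∂P ≤
        (p + 1) ^ 2 / (2 * p + 1) * B ^ 2 * (((n : ℝ) + 1) / n) ^ (2 * p + 1) := by
  intro n hn
  have hN : (0 : ℝ) < n := by exact_mod_cast hn
  set N : ℝ := (n : ℝ) with hNdef
  set w : ℕ → ℝ := fun i => ((i : ℝ) / N) ^ p with hwdef
  set S : ℝ := ∑ i ∈ Finset.Icc 1 n, w i with hSdef
  have hwpos : ∀ i ∈ Finset.Icc 1 n, 0 < w i := by
    intro i hi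
    have h1 : (1 : ℕ) ≤ i := (Finset.mem_Icc.1 hi).1
    have : (0 : ℝ) < (i : ℝ) / N := by
      apply div_pos _ hN
      exact_mod_cast Nat.lt_of_lt_of_le Nat.zero_lt_one h1
    exact Real.rpow_pos_of_pos this p
  have hSpos : 0 < S := by
    apply Finset.sum_pos hwpos
    exact Finset.nonempty_Icc.2 hn
  -- analytic bounds
  have hp1 : (1 : ℝ) ≤ p + 1 := by linarith
  have hq1 : (1 : ℝ) ≤ 2 * p + 1 := by linarith
  -- lower bound on S
  have low : ∀ i ∈ Finset.Icc 1 n,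
      ((i : ℝ) / N) ^ (p + 1) - (((i : ℝ) - 1) / N) ^ (p + 1) ≤ (p + 1) / N * w i := by
    intro i hi
    have h1 : (1 : ℕ) ≤ i := (Finset.mem_Icc.1 hi).1
    have hi1 : (1 : ℝ) ≤ (i : ℝ) := by exact_mod_cast h1
    have ha : (0 : ℝ) < (i : ℝ) / N := div_pos (by linarith) hN
    have hb : (0 : ℝ) ≤ ((i : ℝ) - 1) / N := div_nonneg (by linarith) hN.le
    have h := bern_aux ha hb hp1
    rw [show p + 1 - 1 = p from by ring] at h
    have hba : ((i : ℝ) - 1) / N - (i : ℝ) / N = -(1 / N) := by ring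
    rw [hba] at h
    have he : (p + 1) * ((i : ℝ) / N) ^ p * (-(1 / N)) = -((p + 1) / N * w i) := by
      simp only [hwdef]
      ring
    rw [he] at h
    linarith
  have tele1 : ∑ i ∈ Finset.Icc 1 n,
      (((i : ℝ) / N) ^ (p + 1) - (((i : ℝ) - 1) / N) ^ (p + 1)) = 1 := by
    rw [← Finset.Ico_add_one_right_eq_Icc, Finset.sum_Ico_eq_sum_range]
    have : ∀ j ∈ Finset.range (n + 1 - 1),
        (((1 + j : ℕ) : ℝ) / N) ^ (p + 1) - ((((1 + j : ℕ) : ℝ) - 1) / N) ^ (p + 1)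
          = (fun k : ℕ => ((k : ℝ) / N) ^ (p + 1)) (j + 1)
            - (fun k : ℕ => ((k : ℝ) / N) ^ (p + 1)) j := by
      intro j _
      push_cast
      ring_nf
    rw [Finset.sum_congr rfl this, Finset.sum_range_sub (fun k : ℕ => ((k : ℝ) / N) ^ (p + 1))]
    simp only [Nat.add_sub_cancel, Nat.cast_zero]
    rw [show (n : ℝ) / N = 1 from by rw [hNdef]; field_simp]
    rw [Real.one_rpow, zero_div, Real.zero_rpow (by linarith), sub_zero]
  have hSlow : N / (p + 1) ≤ S := by
    have h := Finset.sum_le_sum low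
    rw [tele1, ← Finset.mul_sum, ← hSdef] at h
    rw [div_le_iff₀ (by linarith : (0:ℝ) < p + 1)]
    have := mul_le_mul_of_nonneg_left h hN.le
    calc N = N * 1 := by ring
      _ ≤ N * ((p + 1) / N * S) := by nlinarith
      _ = S * (p + 1) := by field_simp
  -- upper bound on T
  set T : ℝ := ∑ i ∈ Finset.Icc 1 n, ((i : ℝ) / N) ^ (2 * p) with hTdef
  have up : ∀ i ∈ Finset.Icc 1 n,
      ((i : ℝ) / N) ^ (2 * p) ≤
        N / (2 * p + 1) * ((((i : ℝ) + 1) / N) ^ (2 * p + 1) - ((i : ℝ) / N) ^ (2 * p + 1)) := by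
    intro i hi
    have h1 : (1 : ℕ) ≤ i := (Finset.mem_Icc.1 hi).1
    have hi1 : (1 : ℝ) ≤ (i : ℝ) := by exact_mod_cast h1
    have ha : (0 : ℝ) < (i : ℝ) / N := div_pos (by linarith) hN
    have hb : (0 : ℝ) ≤ ((i : ℝ) + 1) / N := div_nonneg (by linarith) hN.le
    have h := bern_aux ha hb hq1
    rw [show 2 * p + 1 - 1 = 2 * p from by ring] at h
    have hba : ((i : ℝ) + 1) / N - (i : ℝ) / N = 1 / N := by ring
    rw [hba] at h
    have h2 : (2 * p + 1) / N * ((i : ℝ) / N) ^ (2 * p) ≤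
        (((i : ℝ) + 1) / N) ^ (2 * p + 1) - ((i : ℝ) / N) ^ (2 * p + 1) := by
      have : (2 * p + 1) * ((i : ℝ) / N) ^ (2 * p) * (1 / N)
          = (2 * p + 1) / N * ((i : ℝ) / N) ^ (2 * p) := by ring
      linarith [this ▸ h]
    have h3 := mul_le_mul_of_nonneg_left h2
      (by positivity : (0:ℝ) ≤ N / (2 * p + 1))
    calc ((i : ℝ) / N) ^ (2 * p)
        = N / (2 * p + 1) * ((2 * p + 1) / N * ((i : ℝ) / N) ^ (2 * p)) := by
          field_simp
      _ ≤ _ := h3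
  have tele2 : ∑ i ∈ Finset.Icc 1 n,
      ((((i : ℝ) + 1) / N) ^ (2 * p + 1) - ((i : ℝ) / N) ^ (2 * p + 1))
        = ((N + 1) / N) ^ (2 * p + 1) - (1 / N) ^ (2 * p + 1) := by
    rw [← Finset.Ico_add_one_right_eq_Icc, Finset.sum_Ico_eq_sum_range]
    have : ∀ j ∈ Finset.range (n + 1 - 1),
        ((((1 + j : ℕ) : ℝ) + 1) / N) ^ (2 * p + 1) - (((1 + j : ℕ) : ℝ) / N) ^ (2 * p + 1)
          = (fun k : ℕ => (((k : ℝ) + 1) / N) ^ (2 * p + 1)) (j + 1)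
            - (fun k : ℕ => (((k : ℝ) + 1) / N) ^ (2 * p + 1)) j := by
      intro j _
      push_cast
      ring_nf
    rw [Finset.sum_congr rfl this,
      Finset.sum_range_sub (fun k : ℕ => (((k : ℝ) + 1) / N) ^ (2 * p + 1))]
    simp only [Nat.add_sub_cancel, Nat.cast_zero, zero_add]
    rfl
  have hTup : T ≤ N / (2 * p + 1) * ((N + 1) / N) ^ (2 * p + 1) := by
    have h := Finset.sum_le_sum up
    rw [← Finset.mul_sum, tele2] at h
    have h2 : (0:ℝ) ≤ (1 / N) ^ (2 * p + 1) := Real.rpow_nonneg (by positivity) _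
    have h3 : (0:ℝ) ≤ N / (2 * p + 1) := by positivity
    calc T ≤ N / (2 * p + 1) * (((N + 1) / N) ^ (2 * p + 1) - (1 / N) ^ (2 * p + 1)) := h
      _ ≤ N / (2 * p + 1) * ((N + 1) / N) ^ (2 * p + 1) := by nlinarith
  -- probabilistic part
  have hmemZ : ∀ i, MemLp (fun ω => Z i ω - μ) 2 P := fun i =>
    MemLp.of_bound ((hmeas i).sub measurable_const).aestronglyMeasurable B
      ((hbdd i).mono fun ω h => by simpa [Real.norm_eq_abs] using h)
  have hintZ : ∀ i, Integrable (fun ω => Z i ω - μ) P := fun i =>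
    (hmemZ i).integrable one_le_two
  have hmean0 : ∀ i, ∫ ω, (Z i ω - μ) ∂P = 0 := by
    intro i
    have hZ : Integrable (Z i) P := by
      have h := (hintZ i).add (integrable_const μ)
      have heq : Z i = (fun ω => Z i ω - μ) + fun _ => μ := by
        funext ω; simp
      rw [heq]; exact h
    rw [integral_sub hZ (integrable_const μ), hmean i, integral_const]
    simp
  set Y : ℕ → Ω → ℝ := fun i ω => w i * (Z i ω - μ) with hYdef
  have hmemY : ∀ i, MemLp (Y i) 2 P := fun i => (hmemZ i).const_mul (w i)
  have hYint : ∀ i, Integrable (Y i) P := fun i => (hmemY i).integrable one_le_two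
  have hYmean : ∀ i, ∫ ω, Y i ω ∂P = 0 := by
    intro i
    simp only [hYdef]
    rw [integral_const_mul, hmean0 i, mul_zero]
  have hvar_le : ∀ i ∈ Finset.Icc 1 n, variance (Y i) P ≤ w i ^ 2 * B ^ 2 := by
    intro i _
    have h1 : ∫ ω, (Y i ω) ^ 2 ∂P ≤ w i ^ 2 * B ^ 2 := by
      have hb2 : ∀ᵐ ω ∂P, (Y i ω) ^ 2 ≤ w i ^ 2 * B ^ 2 := by
        filter_upwards [hbdd i] with ω h
        have habs := abs_le.1 h
        have hZ2 : (Z i ω - μ) ^ 2 ≤ B ^ 2 := sq_le_sq' (by linarith [habs.1]) habs.2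
        have : (Y i ω) ^ 2 = w i ^ 2 * (Z i ω - μ) ^ 2 := by
          simp only [hYdef]; ring
        rw [this]
        nlinarith [sq_nonneg (w i)]
      have hint2 : Integrable (fun ω => (Y i ω) ^ 2) P := by
        have := (hmemY i).integrable_sq
        simpa [Pi.pow_apply] using this
      calc ∫ ω, (Y i ω) ^ 2 ∂P ≤ ∫ _ω, w i ^ 2 * B ^ 2 ∂P :=
            integral_mono_ae hint2 (integrable_const _) hb2
        _ = w i ^ 2 * B ^ 2 := by simp
    have h2 := variance_le_expectation_sq (X := Y i) (hmemY i).aestronglyMeasurable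
    calc variance (Y i) P ≤ ∫ ω, (Y i ^ 2) ω ∂P := h2
      _ = ∫ ω, (Y i ω) ^ 2 ∂P := by simp [Pi.pow_apply]
      _ ≤ w i ^ 2 * B ^ 2 := h1
  have hpair : Set.Pairwise ↑(Finset.Icc 1 n) fun i j => IndepFun (Y i) (Y j) P := by
    intro i _ j _ hij
    have hI : IndepFun (Z i) (Z j) P := hindep.indepFun hij
    have := hI.comp (φ := fun x => w i * (x - μ)) (ψ := fun x => w j * (x - μ))
      ((measurable_id.sub_const μ).const_mul _) ((measurable_id.sub_const μ).const_mul _)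
    exact this
  have hvarsum : variance (∑ i ∈ Finset.Icc 1 n, Y i) P
      = ∑ i ∈ Finset.Icc 1 n, variance (Y i) P :=
    IndepFun.variance_sum (fun i _ => hmemY i) hpair
  have hmemYS : MemLp (∑ i ∈ Finset.Icc 1 n, Y i) 2 P :=
    memLp_finset_sum' _ fun i _ => hmemY i
  have hsum_sq : ∫ ω, (∑ i ∈ Finset.Icc 1 n, Y i ω) ^ 2 ∂P
      = variance (∑ i ∈ Finset.Icc 1 n, Y i) P := by
    rw [variance_eq_sub hmemYS]
    have hm : (∫ a, (∑ i ∈ Finset.Icc 1 n, Y i) a ∂P) = 0 := by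
      simp only [Finset.sum_apply]
      rw [integral_finset_sum _ fun i _ => hYint i]
      simp [hYmean]
    rw [hm]
    simp only [Pi.pow_apply, Finset.sum_apply]
    ring
  -- pointwise identity for the integrand
  have hpt : ∀ ω, (n : ℝ) *
      ((∑ i ∈ Finset.Icc 1 n, ((i : ℝ) / (n:ℝ)) ^ p * Z i ω) /
        (∑ i ∈ Finset.Icc 1 n, ((i : ℝ) / (n:ℝ)) ^ p) - μ) ^ 2
        = N / S ^ 2 * (∑ i ∈ Finset.Icc 1 n, Y i ω) ^ 2 := by
    intro ω
    have hsum : ∑ i ∈ Finset.Icc 1 n, Y i ω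
        = (∑ i ∈ Finset.Icc 1 n, w i * Z i ω) - μ * S := by
      simp only [hYdef, mul_sub, Finset.sum_sub_distrib, hSdef, Finset.mul_sum]
      congr 1
      apply Finset.sum_congr rfl
      intro i _
      ring
    rw [hsum]
    have hws : ∀ i : ℕ, ((i : ℝ) / N) ^ p = w i := fun i => rfl
    simp only [hws, ← hSdef, ← hNdef]
    have hd : (∑ i ∈ Finset.Icc 1 n, w i * Z i ω) / S - μ
        = ((∑ i ∈ Finset.Icc 1 n, w i * Z i ω) - μ * S) / S := by
      field_simp
    rw [hd, div_pow]
    ring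
  calc ∫ ω, (n : ℝ) *
          ((∑ i ∈ Finset.Icc 1 n, ((i : ℝ) / n) ^ p * Z i ω) /
            (∑ i ∈ Finset.Icc 1 n, ((i : ℝ) / n) ^ p) - μ) ^ 2 ∂P
      = ∫ ω, N / S ^ 2 * (∑ i ∈ Finset.Icc 1 n, Y i ω) ^ 2 ∂P := by
        simp only [hpt]
    _ = N / S ^ 2 * ∫ ω, (∑ i ∈ Finset.Icc 1 n, Y i ω) ^ 2 ∂P := integral_const_mul _ _
    _ = N / S ^ 2 * ∑ i ∈ Finset.Icc 1 n, variance (Y i) P := by rw [hsum_sq, hvarsum]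
    _ ≤ N / S ^ 2 * (B ^ 2 * T) := by
        apply mul_le_mul_of_nonneg_left _ (by positivity)
        have hTw : ∑ i ∈ Finset.Icc 1 n, w i ^ 2 * B ^ 2 = B ^ 2 * T := by
          rw [hTdef, Finset.mul_sum]
          apply Finset.sum_congr rfl
          intro i _
          have hwi : w i ^ 2 = ((i : ℝ) / N) ^ (2 * p) := by
            rw [hwdef]
            rw [← Real.rpow_natCast ((((i:ℕ) : ℝ) / N) ^ p) 2,
              ← Real.rpow_mul (div_nonneg (Nat.cast_nonneg i) hN.le)]
            norm_num
            rw [mul_comm]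
          rw [hwi]
          ring
        calc ∑ i ∈ Finset.Icc 1 n, variance (Y i) P
            ≤ ∑ i ∈ Finset.Icc 1 n, w i ^ 2 * B ^ 2 := Finset.sum_le_sum hvar_le
          _ = B ^ 2 * T := hTw
    _ ≤ N / (N / (p + 1)) ^ 2 *
          (B ^ 2 * (N / (2 * p + 1) * ((N + 1) / N) ^ (2 * p + 1))) := by
        have hS2 : (N / (p + 1)) ^ 2 ≤ S ^ 2 :=
          pow_le_pow_left₀ (by positivity) hSlow 2
        have hS2pos : (0:ℝ) < (N / (p + 1)) ^ 2 := by positivity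
        gcongr
    _ = (p + 1) ^ 2 / (2 * p + 1) * B ^ 2 * ((N + 1) / N) ^ (2 * p + 1) := by
        field_simp
end

section
/- (Gradient drift of consecutive weighted surrogate functions, key bound in the proof of Proposition 4.4.) Let p > 0, let D ⊆ ℝ^n, and let f_1, …, f_{t+1} : ℝ^n → ℝ be differentiable functions such that ‖∇f_τ(d)‖ ≤ G for all d ∈ D and all τ = 1, …, t+1. Define the weighted surrogate G_t(d) = (∑_{τ=1}^t τ^p f_τ(d)) / (∑_{τ=1}^t τ^p). Then for every d ∈ D, ‖∇G_{t+1}(d) − ∇G_t(d)‖ ≤ 2G(p+1)/(t+1). -/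
lemma hasGradientAt_sum_smul {E : Type*} [NormedAddCommGroup E] [InnerProductSpace ℝ E]
    [CompleteSpace E] (s : Finset ℕ) (c : ℕ → ℝ) (f : ℕ → E → ℝ) (g : ℕ → E) (x : E)
    (h : ∀ τ ∈ s, HasGradientAt (f τ) (g τ) x) :
    HasGradientAt (fun y => ∑ τ ∈ s, c τ * f τ y) (∑ τ ∈ s, c τ • g τ) x := by
  rw [hasGradientAt_iff_hasFDerivAt, map_sum]
  exact HasFDerivAt.fun_sum fun τ hτ => by
    simpa [map_smul] using ((hasGradientAt_iff_hasFDerivAt.1 (h τ hτ)).const_mul (c τ))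

lemma gradient_weighted {E : Type*} [NormedAddCommGroup E] [InnerProductSpace ℝ E]
    [CompleteSpace E] (s : Finset ℕ) (c : ℕ → ℝ) (S : ℝ) (f : ℕ → E → ℝ) (d : E)
    (hdiff : ∀ τ ∈ s, DifferentiableAt ℝ (f τ) d) :
    gradient (fun x => (∑ τ ∈ s, c τ * f τ x) / S) d
      = ∑ τ ∈ s, (c τ / S) • gradient (f τ) d := by
  have h := hasGradientAt_sum_smul s (fun τ => c τ / S) f
    (fun τ => gradient (f τ) d) d (fun τ hτ => (hdiff τ hτ).hasGradientAt)
  have feq : (fun x => (∑ τ ∈ s, c τ * f τ x) / S)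
      = fun x => ∑ τ ∈ s, (c τ / S) * f τ x := by
    funext x
    rw [Finset.sum_div]
    exact Finset.sum_congr rfl fun τ _ => (div_mul_eq_mul_div _ _ _).symm
  rw [feq]
  exact h.gradient

lemma sum_rpow_lower (p : ℝ) (hp : 0 < p) (m : ℕ) :
    (m : ℝ) ^ (p + 1) / (p + 1) ≤ ∑ τ ∈ Finset.Icc 1 m, (τ : ℝ) ^ p := by
  have hmono : MonotoneOn (fun x : ℝ => x ^ p) (Set.Icc (0:ℝ) (0 + m)) := by
    intro a ha b hb hab
    exact Real.rpow_le_rpow ha.1 hab hp.le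
  have := hmono.integral_le_sum
  rw [integral_rpow (Or.inl (by linarith))] at this
  simp only [zero_add] at this
  rw [Real.zero_rpow (by positivity)] at this
  calc (m : ℝ) ^ (p + 1) / (p + 1) = ((m:ℝ) ^ (p+1) - 0) / (p + 1) := by ring
    _ ≤ ∑ i ∈ Finset.range m, ((i:ℝ) + 1) ^ p := by
        convert this using 2 with i; push_cast; ring
    _ = ∑ τ ∈ Finset.Icc 1 m, (τ : ℝ) ^ p := by
        rw [show Finset.Icc 1 m = Finset.Ico 1 (m+1) by rfl, Finset.sum_Ico_eq_sum_range]
        simp [add_comm]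

/-- **Gradient drift of consecutive weighted surrogate functions** (key bound in the
proof of Proposition 4.4). Let `p > 0`, `D ⊆ ℝ^n`, and `f 1, …, f (t+1) : ℝ^n → ℝ`
differentiable with `‖∇(f τ)(d)‖ ≤ G` on `D`. With the weighted surrogates
`G_t(d) = (∑_{τ=1}^t τ^p · f τ d) / (∑_{τ=1}^t τ^p)`, for every `d ∈ D`,
`‖∇G_{t+1}(d) − ∇G_t(d)‖ ≤ 2G(p+1)/(t+1)`. -/
theorem stmt12 (n : ℕ) (p G : ℝ) (hp : 0 < p)
    (D : Set (EuclideanSpace ℝ (Fin n))) (t : ℕ) (ht : 1 ≤ t)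
    (f : ℕ → EuclideanSpace ℝ (Fin n) → ℝ)
    (hdiff : ∀ τ ∈ Finset.Icc 1 (t + 1), Differentiable ℝ (f τ))
    (hbdd : ∀ τ ∈ Finset.Icc 1 (t + 1), ∀ d ∈ D, ‖gradient (f τ) d‖ ≤ G) :
    ∀ d ∈ D,
      ‖gradient (fun x => (∑ τ ∈ Finset.Icc 1 (t + 1), (τ : ℝ) ^ p * f τ x) /
            (∑ τ ∈ Finset.Icc 1 (t + 1), (τ : ℝ) ^ p)) d -
          gradient (fun x => (∑ τ ∈ Finset.Icc 1 t, (τ : ℝ) ^ p * f τ x) /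
            (∑ τ ∈ Finset.Icc 1 t, (τ : ℝ) ^ p)) d‖ ≤
        2 * G * (p + 1) / (t + 1) := by
  intro d hd
  have hmem : ∀ τ ∈ Finset.Icc 1 t, τ ∈ Finset.Icc 1 (t + 1) := by
    intro τ hτ
    rw [Finset.mem_Icc] at *
    omega
  have h1mem : (1 : ℕ) ∈ Finset.Icc 1 (t + 1) := by
    rw [Finset.mem_Icc]; omega
  have hG0 : 0 ≤ G := le_trans (norm_nonneg _) (hbdd 1 h1mem d hd)
  set g : ℕ → EuclideanSpace ℝ (Fin n) := fun τ => gradient (f τ) d with hg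
  set S₀ : ℝ := ∑ τ ∈ Finset.Icc 1 t, (τ : ℝ) ^ p with hS₀
  set S₁ : ℝ := ∑ τ ∈ Finset.Icc 1 (t + 1), (τ : ℝ) ^ p with hS₁
  have hpos : ∀ τ ∈ Finset.Icc 1 (t+1), (0:ℝ) < (τ:ℝ)^p := by
    intro τ hτ
    rw [Finset.mem_Icc] at hτ
    have : (0:ℝ) < τ := by exact_mod_cast hτ.1
    positivity
  have hS₀pos : 0 < S₀ :=
    Finset.sum_pos (fun τ hτ => hpos τ (hmem τ hτ)) ⟨1, by rw [Finset.mem_Icc]; omega⟩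
  have hS₁pos : 0 < S₁ := Finset.sum_pos hpos ⟨1, h1mem⟩
  have hsplit : S₁ = S₀ + ((t+1:ℕ):ℝ)^p := by
    rw [hS₁, Finset.sum_Icc_succ_top (by omega : 1 ≤ t + 1)]
  have hS₀le : S₀ ≤ S₁ := by
    rw [hsplit]
    have := (hpos (t+1) (by rw [Finset.mem_Icc]; omega)).le
    linarith
  rw [gradient_weighted _ _ _ _ _ (fun τ hτ => (hdiff τ hτ) d),
      gradient_weighted _ _ _ _ _ (fun τ hτ => (hdiff τ (hmem τ hτ)) d)]
  rw [Finset.sum_Icc_succ_top (by omega : 1 ≤ t + 1)]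
  have hre : (∑ τ ∈ Finset.Icc 1 t, ((τ:ℝ)^p / S₁) • g τ + (((t+1:ℕ):ℝ)^p / S₁) • g (t+1))
      - ∑ τ ∈ Finset.Icc 1 t, ((τ:ℝ)^p / S₀) • g τ
      = (∑ τ ∈ Finset.Icc 1 t, ((τ:ℝ)^p / S₁ - (τ:ℝ)^p / S₀) • g τ)
        + (((t+1:ℕ):ℝ)^p / S₁) • g (t+1) := by
    rw [add_sub_right_comm, ← Finset.sum_sub_distrib]
    simp only [← sub_smul]
  rw [hre]
  have hbound : ∀ τ ∈ Finset.Icc 1 t,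
      ‖((τ:ℝ)^p / S₁ - (τ:ℝ)^p / S₀) • g τ‖ ≤ ((τ:ℝ)^p / S₀ - (τ:ℝ)^p / S₁) * G := by
    intro τ hτ
    rw [norm_smul, Real.norm_eq_abs]
    have hτp := (hpos τ (hmem τ hτ)).le
    have hle : (τ:ℝ)^p / S₁ ≤ (τ:ℝ)^p / S₀ := by
      apply div_le_div_of_nonneg_left hτp hS₀pos hS₀le
    rw [abs_of_nonpos (by linarith), neg_sub]
    exact mul_le_mul_of_nonneg_left (hbdd τ (hmem τ hτ) d hd) (by linarith)
  have hlast : ‖(((t+1:ℕ):ℝ)^p / S₁) • g (t+1)‖ ≤ (((t+1:ℕ):ℝ)^p / S₁) * G := by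
    rw [norm_smul, Real.norm_eq_abs]
    have hc : (0:ℝ) ≤ ((t+1:ℕ):ℝ)^p / S₁ :=
      div_nonneg (hpos (t+1) (by rw [Finset.mem_Icc]; omega)).le hS₁pos.le
    rw [abs_of_nonneg hc]
    exact mul_le_mul_of_nonneg_left (hbdd (t+1) (by rw [Finset.mem_Icc]; omega) d hd) hc
  have step1 : ‖(∑ τ ∈ Finset.Icc 1 t, ((τ:ℝ)^p / S₁ - (τ:ℝ)^p / S₀) • g τ)
        + (((t+1:ℕ):ℝ)^p / S₁) • g (t+1)‖
      ≤ (∑ τ ∈ Finset.Icc 1 t, ((τ:ℝ)^p / S₀ - (τ:ℝ)^p / S₁) * G)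
        + (((t+1:ℕ):ℝ)^p / S₁) * G := by
    refine le_trans (norm_add_le _ _) (add_le_add ?_ hlast)
    exact le_trans (norm_sum_le _ _) (Finset.sum_le_sum hbound)
  refine le_trans step1 ?_
  have hsum_eq : (∑ τ ∈ Finset.Icc 1 t, ((τ:ℝ)^p / S₀ - (τ:ℝ)^p / S₁) * G)
      = S₀ * ((1/S₀ - 1/S₁) * G) := by
    rw [Finset.sum_congr rfl (fun τ _ => by ring :
      ∀ τ ∈ Finset.Icc 1 t, ((τ:ℝ)^p / S₀ - (τ:ℝ)^p / S₁) * G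
        = (τ:ℝ)^p * ((1/S₀ - 1/S₁) * G)), ← Finset.sum_mul, ← hS₀]
  rw [hsum_eq]
  have h0 : S₀ ≠ 0 := hS₀pos.ne'
  have h1 : S₁ ≠ 0 := hS₁pos.ne'
  have hapos : (0:ℝ) < ((t+1:ℕ):ℝ)^p := hpos (t+1) (by rw [Finset.mem_Icc]; omega)
  have heq : S₀ * ((1/S₀ - 1/S₁) * G) + (((t+1:ℕ):ℝ)^p / S₁) * G
      = 2 * G * (((t+1:ℕ):ℝ)^p / S₁) := by
    have ha : S₀ + ((t+1:ℕ):ℝ)^p ≠ 0 := by positivity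
    rw [hsplit]
    field_simp
    ring
  rw [heq]
  have hcast : ((t+1:ℕ):ℝ) = (t:ℝ) + 1 := by push_cast; ring
  have htpos : (0:ℝ) < (t:ℝ) + 1 := by positivity
  have hlow := sum_rpow_lower p hp (t+1)
  rw [← hS₁] at hlow
  have hkey : ((t+1:ℕ):ℝ)^p * ((t:ℝ)+1) ≤ (p+1) * S₁ := by
    have hx : ((t:ℝ)+1) ^ (p+1) = ((t+1:ℕ):ℝ)^p * ((t:ℝ)+1) := by
      rw [hcast, Real.rpow_add_one (by positivity)]
    have h2 : ((t:ℝ)+1) ^ (p+1) ≤ (p+1) * S₁ := by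
      rw [← hcast]
      rw [div_le_iff₀ (by positivity)] at hlow
      linarith [hlow]
    linarith [hx ▸ h2]
  have hdiv : ((t+1:ℕ):ℝ)^p / S₁ ≤ (p+1) / ((t:ℝ)+1) := by
    rw [div_le_div_iff₀ hS₁pos htpos]
    linarith
  calc 2 * G * (((t+1:ℕ):ℝ)^p / S₁) ≤ 2 * G * ((p+1) / ((t:ℝ)+1)) := by
        exact mul_le_mul_of_nonneg_left hdiv (by positivity)
    _ = 2 * G * (p+1) / ((t:ℝ)+1) := by ring
end
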